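/- arXiv:1102.0268 — 8 statements merged into one kernel-verified Lean document; each statement's English description precedes it below -/
import Mathlib

section
/- The rule (r2) is admissible in IntGC: for all formulas A and B, if ⊢ A→B then ⊢ ∇A→∇B and ⊢ ◆A→◆B. -/
/-- Formulas of IntGC over a countable set of propositional variables (indexed by ℕ),
with connectives ¬, →, ∨, ∧ and modal operators ◆ (`dia`) and ∇ (`nab`). -/
inductive Formula : Type
  | var : ℕ → Formula
  | and : Formula → Formula → Formula
  | or  : Formula → Formula → Formula
  | imp : Formula → Formula → Formula
  | neg : Formula → Formula
  | dia : Formula → Formula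
  | nab : Formula → Formula
  deriving DecidableEq

namespace Formula

/-- ⊤ := p → p for a fixed propositional variable. -/
def top : Formula := imp (var 0) (var 0)

/-- ⊥ := ¬⊤. -/
def bot : Formula := neg top

/-- A ↔ B as defined connective. -/
def iff (A B : Formula) : Formula := Formula.and (imp A B) (imp B A)

end Formula

open Formula

/-- Provability in IntGC: the smallest set of formulas containing all substitution
instances of intuitionistic propositional theorems (generated by a standard Hilbert-style
axiomatisation, given as schemes), closed under modus ponens and the rules (GC1), (GC2). -/
inductive Prov : Formula → Prop
  | ax1 (A B : Formula) : Prov (imp A (imp B A))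
  | ax2 (A B C : Formula) : Prov (imp (imp A (imp B C)) (imp (imp A B) (imp A C)))
  | ax3 (A B : Formula) : Prov (imp (Formula.and A B) A)
  | ax4 (A B : Formula) : Prov (imp (Formula.and A B) B)
  | ax5 (A B : Formula) : Prov (imp A (imp B (Formula.and A B)))
  | ax6 (A B : Formula) : Prov (imp A (Formula.or A B))
  | ax7 (A B : Formula) : Prov (imp B (Formula.or A B))
  | ax8 (A B C : Formula) : Prov (imp (imp A C) (imp (imp B C) (imp (Formula.or A B) C)))
  | ax9 (A B : Formula) : Prov (imp (imp A B) (imp (imp A (neg B)) (neg A)))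
  | ax10 (A B : Formula) : Prov (imp (neg A) (imp A B))
  | mp {A B : Formula} : Prov (imp A B) → Prov A → Prov B
  | gc1 {A B : Formula} : Prov (imp A (nab B)) → Prov (imp (dia A) B)
  | gc2 {A B : Formula} : Prov (imp (dia A) B) → Prov (imp A (nab B))

/-- Satisfaction for the Kripke semantics of IntGC, relative to raw frame data:
a preorder `le`, an accessibility relation `R`, and a valuation `v`. -/
def Sat {X : Type} (le R : X → X → Prop) (v : ℕ → X → Prop) : X → Formula → Prop
  | x, .var p => v p x
  | x, .and A B => Sat le R v x A ∧ Sat le R v x B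
  | x, .or A B => Sat le R v x A ∨ Sat le R v x B
  | x, .imp A B => ∀ y, le x y → Sat le R v y A → Sat le R v y B
  | x, .neg A => ∀ y, le x y → ¬ Sat le R v y A
  | x, .dia A => ∃ y, R x y ∧ Sat le R v y A
  | x, .nab A => ∀ y, R y x → Sat le R v y A

/-- An IntGC-model: a Kripke frame (nonempty carrier, preorder ≤, relation R satisfying
x ≥ y, y R z, z ≥ w ⟹ x R w) together with a valuation assigning ≤-upward-closed sets
to propositional variables. -/
structure KModel where
  X : Type
  ne : Nonempty X
  le : X → X → Prop
  le_refl : ∀ x, le x x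
  le_trans : ∀ x y z, le x y → le y z → le x z
  R : X → X → Prop
  frame : ∀ x y z w, le y x → R y z → le w z → R x w
  v : ℕ → X → Prop
  up : ∀ p x y, le x y → v p x → v p y

/-- Satisfaction in an IntGC-model. -/
def KModel.sat (M : KModel) (x : M.X) (B : Formula) : Prop := Sat M.le M.R M.v x B

/-- The set of subformulas of a formula (including the formula itself). -/
def Subf : Formula → Set Formula
  | .var p => {.var p}
  | .and A B => insert (.and A B) (Subf A ∪ Subf B)
  | .or A B => insert (.or A B) (Subf A ∪ Subf B)
  | .imp A B => insert (.imp A B) (Subf A ∪ Subf B)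
  | .neg A => insert (.neg A) (Subf A)
  | .dia A => insert (.dia A) (Subf A)
  | .nab A => insert (.nab A) (Subf A)

/-- Γ = Subf(A) ∪ {∇◆B : ◆B ∈ Subf(A)} ∪ {◆∇B : ∇B ∈ Subf(A)}. -/
def Gam (A : Formula) : Set Formula :=
  Subf A ∪ {F | ∃ B, dia B ∈ Subf A ∧ F = nab (dia B)}
        ∪ {F | ∃ B, nab B ∈ Subf A ∧ F = dia (nab B)}

/-- `ndIter n F` is (∇◆)ⁿ F. -/
def ndIter : ℕ → Formula → Formula
  | 0, F => F
  | n+1, F => nab (dia (ndIter n F))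

/-- `dnIter n F` is (◆∇)ⁿ F. -/
def dnIter : ℕ → Formula → Formula
  | 0, F => F
  | n+1, F => dia (nab (dnIter n F))

/-- Σ = Subf(A) ∪ {(∇◆)ⁿ∇B : ∇B ∈ Γ} ∪ {◆(∇◆)ⁿ∇B : ∇B ∈ Γ}
           ∪ {(◆∇)ⁿ◆B : ◆B ∈ Γ} ∪ {∇(◆∇)ⁿ◆B : ◆B ∈ Γ}. -/
def Sig (A : Formula) : Set Formula :=
  Subf A
  ∪ {F | ∃ n B, nab B ∈ Gam A ∧ F = ndIter n (nab B)}
  ∪ {F | ∃ n B, nab B ∈ Gam A ∧ F = dia (ndIter n (nab B))}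
  ∪ {F | ∃ n B, dia B ∈ Gam A ∧ F = dnIter n (dia B)}
  ∪ {F | ∃ n B, dia B ∈ Gam A ∧ F = nab (dnIter n (dia B))}

/-- The equivalence x ∼ y iff x and y satisfy exactly the same formulas of Σ. -/
def simSetoid (M : KModel) (A : Formula) : Setoid M.X :=
  ⟨fun x y => ∀ B ∈ Sig A, (M.sat x B ↔ M.sat y B),
   ⟨fun _ _ _ => Iff.rfl,
    fun h B hB => (h B hB).symm,
    fun h1 h2 B hB => (h1 B hB).trans (h2 B hB)⟩⟩

/-- [x] ≤^f [y] iff every formula of Σ satisfied at x is satisfied at y. -/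
def leF (M : KModel) (A : Formula) (a b : Quotient (simSetoid M A)) : Prop :=
  ∀ x y : M.X, Quotient.mk (simSetoid M A) x = a → Quotient.mk (simSetoid M A) y = b →
    ∀ B ∈ Sig A, M.sat x B → M.sat y B

/-- [x] R^f [y] iff for all B with ∇B ∈ Σ, y ⊨ ∇B implies x ⊨ B. -/
def RF (M : KModel) (A : Formula) (a b : Quotient (simSetoid M A)) : Prop :=
  ∀ x y : M.X, Quotient.mk (simSetoid M A) x = a → Quotient.mk (simSetoid M A) y = b →
    ∀ B : Formula, nab B ∈ Sig A → M.sat y (nab B) → M.sat x B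

/-- v^f(p) = {[x] : x ⊨ p} for propositional variables p ∈ Σ, and ∅ otherwise. -/
def vF (M : KModel) (A : Formula) (p : ℕ) (a : Quotient (simSetoid M A)) : Prop :=
  var p ∈ Sig A ∧ ∃ x : M.X, Quotient.mk (simSetoid M A) x = a ∧ M.sat x (var p)

theorem prov_trans {A B C : Formula} (h1 : Prov (Formula.imp A B))
    (h2 : Prov (Formula.imp B C)) : Prov (Formula.imp A C) := by
  have h3 : Prov (Formula.imp A (Formula.imp B C)) :=
    Prov.mp (Prov.ax1 _ _) h2
  exact Prov.mp (Prov.mp (Prov.ax2 A B C) h3) h1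

/-- (r2): if ⊢ A → B then ⊢ ∇A → ∇B and ⊢ ◆A → ◆B. -/
theorem r2_admissible (A B : Formula) (h : Prov (Formula.imp A B)) :
    Prov (Formula.imp (Formula.nab A) (Formula.nab B)) ∧
    Prov (Formula.imp (Formula.dia A) (Formula.dia B)) := by
  have idA : Prov (Formula.imp (Formula.nab A) (Formula.nab A)) :=
    Prov.mp (Prov.mp (Prov.ax2 (nab A) (Formula.imp (nab A) (nab A)) (nab A)) (Prov.ax1 _ _)) (Prov.ax1 _ _)
  have idD : Prov (Formula.imp (Formula.dia B) (Formula.dia B)) :=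
    Prov.mp (Prov.mp (Prov.ax2 (dia B) (Formula.imp (dia B) (dia B)) (dia B)) (Prov.ax1 _ _)) (Prov.ax1 _ _)
  constructor
  · exact Prov.gc2 (prov_trans (Prov.gc1 idA) h)
  · exact Prov.gc1 (prov_trans h (Prov.gc2 idD))
end

section
/- (f5) For all formulas A and B, the formula ∇(A→B) → (∇A → ∇B) is provable in IntGC. -/
open Formula

namespace ProofAux
open Formula

lemma pid (A : Formula) : Prov (imp A A) :=
  Prov.mp (Prov.mp (Prov.ax2 A (imp A A) A) (Prov.ax1 A (imp A A))) (Prov.ax1 A A)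

lemma comp {X Y Z : Formula} (h1 : Prov (imp X Y)) (h2 : Prov (imp Y Z)) :
    Prov (imp X Z) :=
  Prov.mp (Prov.mp (Prov.ax2 X Y Z) (Prov.mp (Prov.ax1 (imp Y Z) X) h2)) h1

lemma apply2 {X A B : Formula} (h1 : Prov (imp X (imp A B))) (h2 : Prov (imp X A)) :
    Prov (imp X B) :=
  Prov.mp (Prov.mp (Prov.ax2 X A B) h1) h2

lemma curry {C D E : Formula} (h : Prov (imp (Formula.and C D) E)) :
    Prov (imp C (imp D E)) := by
  have h1 : Prov (imp (imp D (Formula.and C D)) (imp D E)) :=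
    Prov.mp (Prov.ax2 D (Formula.and C D) E) (Prov.mp (Prov.ax1 _ D) h)
  exact comp (Prov.ax5 C D) h1

end ProofAux

open ProofAux

/-- (f5): ⊢ ∇(A→B) → (∇A → ∇B). -/
theorem f5_provable (A B : Formula) :
    Prov (Formula.imp (Formula.nab (Formula.imp A B))
      (Formula.imp (Formula.nab A) (Formula.nab B))) := by
  set X := Formula.and (nab (imp A B)) (nab A) with hX
  have h1 : Prov (imp (dia X) (imp A B)) := Prov.gc1 (Prov.ax3 _ _)
  have h2 : Prov (imp (dia X) A) := Prov.gc1 (Prov.ax4 _ _)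
  have h3 : Prov (imp (dia X) B) := apply2 h1 h2
  exact curry (Prov.gc2 h3)
end

section
/- (Soundness) Every formula provable in IntGC is Kripke valid: if ⊢ A, then A is valid in every IntGC-model on every Kripke frame for IntGC. -/
open Formula

lemma sat_persist (M : KModel) (B : Formula) :
    ∀ x y : M.X, M.le x y → M.sat x B → M.sat y B := by
  induction B with
  | var p => exact fun x y h hx => M.up p x y h hx
  | and A B ihA ihB => exact fun x y h hx => ⟨ihA x y h hx.1, ihB x y h hx.2⟩
  | or A B ihA ihB =>
      exact fun x y h hx => hx.elim (fun h1 => Or.inl (ihA x y h h1))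
        (fun h1 => Or.inr (ihB x y h h1))
  | imp A B ihA ihB =>
      exact fun x y h hx z hz => hx z (M.le_trans _ _ _ h hz)
  | neg A ihA =>
      exact fun x y h hx z hz => hx z (M.le_trans _ _ _ h hz)
  | dia A ihA =>
      rintro x y h ⟨z, hxz, hz⟩
      exact ⟨z, M.frame y x z z h hxz (M.le_refl z), hz⟩
  | nab A ihA =>
      intro x y h hx z hz
      exact hx z (M.frame z z y x (M.le_refl z) hz h)

/-- (Soundness): every IntGC-provable formula is valid in every IntGC-model. -/
theorem soundness (A : Formula) (h : Prov A) :
    ∀ M : KModel, ∀ x : M.X, M.sat x A := by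
  induction h with
  | ax1 A B =>
      intro M x y hy hA z hz hB
      exact sat_persist M A y z hz hA
  | ax2 A B C =>
      intro M x y hy h1 z hz h2 w hw hA
      exact h1 w (M.le_trans _ _ _ hz hw) hA w (M.le_refl w)
        (h2 w hw hA)
  | ax3 A B => intro M x y hy h; exact h.1
  | ax4 A B => intro M x y hy h; exact h.2
  | ax5 A B =>
      intro M x y hy hA z hz hB
      exact ⟨sat_persist M A y z hz hA, hB⟩
  | ax6 A B => intro M x y hy h; exact Or.inl h
  | ax7 A B => intro M x y hy h; exact Or.inr h
  | ax8 A B C =>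
      intro M x y hy h1 z hz h2 w hw h3
      rcases h3 with h3 | h3
      · exact h1 w (M.le_trans _ _ _ hz hw) h3
      · exact h2 w hw h3
  | ax9 A B =>
      intro M x y hy h1 z hz h2 w hw hA
      exact h2 w hw hA w (M.le_refl w) (h1 w (M.le_trans _ _ _ hz hw) hA)
  | ax10 A B =>
      intro M x y hy h1 z hz h2
      exact absurd h2 (h1 z hz)
  | mp hAB hA ihAB ihA =>
      intro M x
      exact ihAB M x x (M.le_refl x) (ihA M x)
  | gc1 h ih =>
      intro M x y hy hdA
      rcases hdA with ⟨z, hyz, hz⟩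
      exact ih M z z (M.le_refl z) hz y hyz
  | gc2 h ih =>
      intro M x y hy hA z hz
      exact ih M z z (M.le_refl z) ⟨y, hz, hA⟩
end

section
/- (Kripke completeness) Every Kripke valid formula is provable in IntGC: if A is valid in every IntGC-model on every Kripke frame for IntGC, then ⊢ A. -/
open Formula

/-!
The canonical model has the prime theories as worlds, ordered by inclusion, with `Γ R Δ` iff
`◆C ∈ Γ` for every `C ∈ Δ`; completeness follows from the truth lemma `Γ ⊨ B ↔ B ∈ Γ`.
All the required prime theories come from one Zorn argument: a set whose consequences stay
inside a prime set `T` of formulas omitting `⊥` extends to a prime theory inside `T`.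
For ◆ one takes `T = {F | ◆F ∈ Γ}`, which is prime because ◆ distributes over `∨`.
For ∇ one uses the adjunction `⊢ ◆E → B ⟺ ⊢ E → ∇B`: whatever follows from `◆Γ` follows
from a single `◆E` with `E` a consequence of `Γ`, so `∇B ∉ Γ` makes `B` underivable from `◆Γ`.
-/

inductive Deriv (Γ : Set Formula) : Formula → Prop
  | prov {A : Formula} : Prov A → Deriv Γ A
  | hyp {A : Formula} : A ∈ Γ → Deriv Γ A
  | mp {A B : Formula} : Deriv Γ (imp A B) → Deriv Γ A → Deriv Γ B

theorem Prov.imp_refl (A : Formula) : Prov (imp A A) :=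
  mp (mp (ax2 A (imp A A) A) (ax1 A (imp A A))) (ax1 A A)

namespace Deriv

variable {Γ Γ' : Set Formula} {A B : Formula}

theorem mono (h : Γ ⊆ Γ') (d : Deriv Γ A) : Deriv Γ' A := by
  induction d with
  | prov hA => exact prov hA
  | hyp hA => exact hyp (h hA)
  | mp _ _ ih₁ ih₂ => exact mp ih₁ ih₂

theorem imp_intro (d : Deriv (insert A Γ) B) : Deriv Γ (imp A B) := by
  induction d with
  | prov hB => exact mp (prov (Prov.ax1 _ _)) (prov hB)
  | hyp hB =>
    rcases hB with rfl | hB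
    · exact prov (Prov.imp_refl _)
    · exact mp (prov (Prov.ax1 _ _)) (hyp hB)
  | mp _ _ ih₁ ih₂ => exact mp (mp (prov (Prov.ax2 _ _ _)) ih₁) ih₂

theorem prov_of_empty (d : Deriv ∅ A) : Prov A := by
  induction d with
  | prov hA => exact hA
  | hyp hA => exact absurd hA (Set.notMem_empty _)
  | mp _ _ ih₁ ih₂ => exact Prov.mp ih₁ ih₂

theorem prov_imp (d : Deriv {A} B) : Prov (imp A B) :=
  prov_of_empty (imp_intro (Γ := ∅) (by simpa using d))

theorem exists_mem_of_sUnion {c : Set (Set Formula)} (hc : IsChain (· ⊆ ·) c)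
    (hne : c.Nonempty) (d : Deriv (⋃₀ c) A) : ∃ t ∈ c, Deriv t A := by
  induction d with
  | prov hA => exact ⟨hne.some, hne.some_mem, prov hA⟩
  | hyp hA =>
    obtain ⟨t, ht, hAt⟩ := hA
    exact ⟨t, ht, hyp hAt⟩
  | mp _ _ ih₁ ih₂ =>
    obtain ⟨t₁, ht₁, d₁⟩ := ih₁
    obtain ⟨t₂, ht₂, d₂⟩ := ih₂
    rcases hc.total ht₁ ht₂ with h | h
    · exact ⟨t₂, ht₂, mp (d₁.mono h) d₂⟩
    · exact ⟨t₁, ht₁, mp d₁ (d₂.mono h)⟩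

end Deriv

namespace Prov

theorem imp_trans {A B C : Formula} (h₁ : Prov (imp A B)) (h₂ : Prov (imp B C)) :
    Prov (imp A C) :=
  Deriv.prov_imp (.mp (.prov h₂) (.mp (.prov h₁) (.hyp rfl)))

theorem bot_imp (B : Formula) : Prov (imp bot B) :=
  Deriv.prov_imp (.mp (.mp (.prov (ax10 top B)) (.hyp rfl)) (.prov (imp_refl _)))

theorem dia_mono {A B : Formula} (h : Prov (imp A B)) : Prov (imp (dia A) (dia B)) :=
  gc1 (imp_trans h (gc2 (imp_refl (dia B))))

theorem dia_bot : Prov (imp (dia bot) bot) :=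
  gc1 (bot_imp _)

theorem dia_or (A B : Formula) : Prov (imp (dia (Formula.or A B)) (Formula.or (dia A) (dia B))) :=
  gc1 (mp (mp (ax8 _ _ _) (gc2 (ax6 (dia A) (dia B)))) (gc2 (ax7 (dia A) (dia B))))

theorem dia_nab (B : Formula) : Prov (imp (dia (nab B)) B) :=
  gc1 (imp_refl _)

end Prov

theorem Deriv.exists_dia_imp {Γ : Set Formula} {B : Formula} (d : Deriv (dia '' Γ) B) :
    ∃ E, Deriv Γ E ∧ Prov (imp (dia E) B) := by
  induction d with
  | prov hB => exact ⟨top, .prov (Prov.imp_refl _), .mp (Prov.ax1 _ _) hB⟩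
  | hyp hB =>
    obtain ⟨C, hC, rfl⟩ := hB
    exact ⟨C, .hyp hC, Prov.imp_refl _⟩
  | mp _ _ ih₁ ih₂ =>
    obtain ⟨E₁, d₁, h₁⟩ := ih₁
    obtain ⟨E₂, d₂, h₂⟩ := ih₂
    refine ⟨and E₁ E₂, .mp (.mp (.prov (Prov.ax5 _ _)) d₁) d₂, Deriv.prov_imp ?_⟩
    exact .mp (.mp (.prov h₁) (.mp (.prov (Prov.dia_mono (Prov.ax3 _ _))) (.hyp rfl)))
      (.mp (.prov h₂) (.mp (.prov (Prov.dia_mono (Prov.ax4 _ _))) (.hyp rfl)))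

theorem Deriv.nab_of_image_dia {Γ : Set Formula} {B : Formula} (d : Deriv (dia '' Γ) B) :
    Deriv Γ (nab B) :=
  let ⟨_, dE, hEB⟩ := d.exists_dia_imp
  .mp (.prov (Prov.gc2 hEB)) dE

structure IsPrimeTheory (Γ : Set Formula) : Prop where
  mem_of_deriv : ∀ {B}, Deriv Γ B → B ∈ Γ
  bot_notMem : bot ∉ Γ
  mem_or : ∀ {B C}, Formula.or B C ∈ Γ → B ∈ Γ ∨ C ∈ Γ

namespace IsPrimeTheory

variable {Γ : Set Formula} {B C : Formula}

theorem mem_of_prov_imp (hΓ : IsPrimeTheory Γ) (h : Prov (imp B C)) (hB : B ∈ Γ) : C ∈ Γ :=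
  hΓ.mem_of_deriv (.mp (.prov h) (.hyp hB))

theorem mem_mp (hΓ : IsPrimeTheory Γ) (h : imp B C ∈ Γ) (hB : B ∈ Γ) : C ∈ Γ :=
  hΓ.mem_of_deriv (.mp (.hyp h) (.hyp hB))

end IsPrimeTheory

theorem exists_isPrimeTheory_subset {Δ₀ T : Set Formula} (h₀ : ∀ F, Deriv Δ₀ F → F ∈ T)
    (hbot : bot ∉ T) (hor : ∀ F G, Formula.or F G ∈ T → F ∈ T ∨ G ∈ T) :
    ∃ Δ, Δ₀ ⊆ Δ ∧ IsPrimeTheory Δ ∧ Δ ⊆ T := by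
  set S : Set (Set Formula) := {Δ | Δ₀ ⊆ Δ ∧ ∀ F, Deriv Δ F → F ∈ T}
  have chain_bound : ∀ c ⊆ S, IsChain (· ⊆ ·) c → c.Nonempty → ∃ ub ∈ S, ∀ s ∈ c, s ⊆ ub := by
    intro c hcS hc ⟨t, ht⟩
    refine ⟨⋃₀ c, ⟨(hcS ht).1.trans (Set.subset_sUnion_of_mem ht), fun F dF => ?_⟩,
      fun _ => Set.subset_sUnion_of_mem⟩
    obtain ⟨u, hu, du⟩ := dF.exists_mem_of_sUnion hc ⟨t, ht⟩
    exact (hcS hu).2 F du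
  obtain ⟨m, hm₀, hm⟩ := zorn_subset_nonempty S chain_bound Δ₀ ⟨subset_rfl, h₀⟩
  have hmT : ∀ F, Deriv m F → F ∈ T := hm.prop.2
  have extend : ∀ C ∉ m, ∃ F, Deriv (insert C m) F ∧ F ∉ T := by
    intro C hC
    by_contra! h
    exact hC (hm.le_of_ge ⟨hm₀.trans (Set.subset_insert C m), h⟩ (Set.subset_insert C m)
      (Set.mem_insert C m))
  have closed : ∀ {C}, Deriv m C → C ∈ m := by
    intro C dC
    by_contra hC
    obtain ⟨F, dF, hF⟩ := extend C hC
    exact hF (hmT F (.mp dF.imp_intro dC))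
  refine ⟨m, hm₀, ⟨closed, fun hbm => hbot (hmT _ (.hyp hbm)), ?_⟩, fun F hF => hmT F (.hyp hF)⟩
  intro C D hCD
  by_contra! hCD'
  obtain ⟨F, dF, hF⟩ := extend C hCD'.1
  obtain ⟨G, dG, hG⟩ := extend D hCD'.2
  have dFG : Deriv m (Formula.or F G) :=
    .mp (.mp (.mp (.prov (Prov.ax8 C D _)) (Deriv.mp (.prov (Prov.ax6 F G)) dF).imp_intro)
      (Deriv.mp (.prov (Prov.ax7 F G)) dG).imp_intro) (.hyp hCD)
  exact (hor F G (hmT _ dFG)).elim hF hG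

theorem exists_isPrimeTheory_notMem {Γ : Set Formula} {B : Formula} (h : ¬ Deriv Γ B) :
    ∃ Δ, Γ ⊆ Δ ∧ IsPrimeTheory Δ ∧ B ∉ Δ := by
  obtain ⟨Δ, hΓΔ, hΔ, hΔT⟩ := exists_isPrimeTheory_subset (T := {F | ¬ Prov (imp F B)})
    (fun F dF hFB => h (.mp (.prov hFB) dF)) (fun hbot => hbot (Prov.bot_imp B))
    (fun F G hFG => not_and_or.mp fun ⟨hF, hG⟩ => hFG (.mp (.mp (Prov.ax8 F G B) hF) hG))
  exact ⟨Δ, hΓΔ, hΔ, fun hB => hΔT hB (Prov.imp_refl B)⟩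

theorem exists_isPrimeTheory_of_not_deriv_imp {Γ : Set Formula} {B C : Formula}
    (h : ¬ Deriv Γ (imp B C)) : ∃ Δ, Γ ⊆ Δ ∧ IsPrimeTheory Δ ∧ B ∈ Δ ∧ C ∉ Δ :=
  let ⟨Δ, hΓΔ, hΔ, hC⟩ := exists_isPrimeTheory_notMem fun d => h d.imp_intro
  ⟨Δ, (Set.subset_insert B Γ).trans hΓΔ, hΔ, hΓΔ (Set.mem_insert B Γ), hC⟩

theorem exists_isPrimeTheory_of_not_deriv_neg {Γ : Set Formula} {B : Formula}
    (h : ¬ Deriv Γ (neg B)) : ∃ Δ, Γ ⊆ Δ ∧ IsPrimeTheory Δ ∧ B ∈ Δ :=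
  let ⟨Δ, hΓΔ, hΔ, hB, _⟩ := exists_isPrimeTheory_of_not_deriv_imp (C := bot) fun d =>
    h (.mp (.mp (.prov (Prov.ax9 B top)) (.prov (.mp (Prov.ax1 _ _) (Prov.imp_refl _)))) d)
  ⟨Δ, hΓΔ, hΔ, hB⟩

theorem exists_isPrimeTheory_of_not_deriv_nab {Γ : Set Formula} {B : Formula}
    (h : ¬ Deriv Γ (nab B)) : ∃ Δ, dia '' Γ ⊆ Δ ∧ IsPrimeTheory Δ ∧ B ∉ Δ :=
  exists_isPrimeTheory_notMem fun d => h d.nab_of_image_dia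

theorem IsPrimeTheory.exists_of_dia_mem {Γ : Set Formula} (hΓ : IsPrimeTheory Γ) {B : Formula}
    (hB : dia B ∈ Γ) : ∃ Δ, IsPrimeTheory Δ ∧ B ∈ Δ ∧ dia '' Δ ⊆ Γ :=
  let ⟨Δ, hBΔ, hΔ, hΔΓ⟩ := exists_isPrimeTheory_subset (Δ₀ := {B}) (T := {F | dia F ∈ Γ})
    (fun _ dF => hΓ.mem_of_prov_imp (Prov.dia_mono dF.prov_imp) hB)
    (fun hbot => hΓ.bot_notMem (hΓ.mem_of_prov_imp Prov.dia_bot hbot))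
    (fun F G hFG => hΓ.mem_or (hΓ.mem_of_prov_imp (Prov.dia_or F G) hFG))
  ⟨Δ, hΔ, hBΔ rfl, Set.image_subset_iff.2 hΔΓ⟩

abbrev PrimeTheory : Type := {Γ : Set Formula // IsPrimeTheory Γ}

def canonicalModel [Nonempty PrimeTheory] : KModel where
  X := PrimeTheory
  ne := inferInstance
  le Γ Δ := Γ.1 ⊆ Δ.1
  le_refl _ := subset_rfl
  le_trans _ _ _ := Set.Subset.trans
  R Γ Δ := dia '' Δ.1 ⊆ Γ.1
  frame _ _ _ _ hyx hyz hwz := (Set.image_mono hwz).trans (hyz.trans hyx)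
  v p Γ := var p ∈ Γ.1
  up _ _ _ h hx := h hx

theorem canonicalModel_sat_iff [Nonempty PrimeTheory] (Γ : PrimeTheory) (B : Formula) :
    canonicalModel.sat Γ B ↔ B ∈ Γ.1 := by
  induction B generalizing Γ with
  | var p => rfl
  | and B C ihB ihC =>
    refine (and_congr (ihB Γ) (ihC Γ)).trans ⟨fun ⟨hB, hC⟩ => ?_, fun h => ?_⟩
    · exact Γ.2.mem_of_deriv (.mp (.mp (.prov (Prov.ax5 B C)) (.hyp hB)) (.hyp hC))
    · exact ⟨Γ.2.mem_of_prov_imp (Prov.ax3 B C) h, Γ.2.mem_of_prov_imp (Prov.ax4 B C) h⟩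
  | or B C ihB ihC =>
    refine (or_congr (ihB Γ) (ihC Γ)).trans ⟨fun h => ?_, Γ.2.mem_or⟩
    exact h.elim (Γ.2.mem_of_prov_imp (Prov.ax6 B C)) (Γ.2.mem_of_prov_imp (Prov.ax7 B C))
  | imp B C ihB ihC =>
    refine ⟨fun h => by_contra fun hBC => ?_, fun h Δ hΓΔ hB => ?_⟩
    · obtain ⟨Δ, hΓΔ, hΔ, hB, hC⟩ :=
        exists_isPrimeTheory_of_not_deriv_imp fun d => hBC (Γ.2.mem_of_deriv d)
      exact hC ((ihC ⟨Δ, hΔ⟩).1 (h ⟨Δ, hΔ⟩ hΓΔ ((ihB ⟨Δ, hΔ⟩).2 hB)))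
    · exact (ihC Δ).2 (Δ.2.mem_mp (hΓΔ h) ((ihB Δ).1 hB))
  | neg B ihB =>
    refine ⟨fun h => by_contra fun hnB => ?_, fun h Δ hΓΔ hB => ?_⟩
    · obtain ⟨Δ, hΓΔ, hΔ, hB⟩ :=
        exists_isPrimeTheory_of_not_deriv_neg fun d => hnB (Γ.2.mem_of_deriv d)
      exact h ⟨Δ, hΔ⟩ hΓΔ ((ihB ⟨Δ, hΔ⟩).2 hB)
    · exact Δ.2.bot_notMem
        (Δ.2.mem_mp (Δ.2.mem_of_prov_imp (Prov.ax10 B bot) (hΓΔ h)) ((ihB Δ).1 hB))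
  | dia B ihB =>
    refine ⟨fun ⟨Δ, hR, hB⟩ => hR (Set.mem_image_of_mem dia ((ihB Δ).1 hB)), fun h => ?_⟩
    obtain ⟨Δ, hΔ, hB, hR⟩ := Γ.2.exists_of_dia_mem h
    exact ⟨⟨Δ, hΔ⟩, hR, (ihB ⟨Δ, hΔ⟩).2 hB⟩
  | nab B ihB =>
    refine ⟨fun h => by_contra fun hnB => ?_, fun h Δ hR => ?_⟩
    · obtain ⟨Δ, hR, hΔ, hB⟩ :=
        exists_isPrimeTheory_of_not_deriv_nab fun d => hnB (Γ.2.mem_of_deriv d)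
      exact hB ((ihB ⟨Δ, hΔ⟩).1 (h ⟨Δ, hΔ⟩ hR))
    · exact (ihB Δ).2 (Δ.2.mem_of_prov_imp (Prov.dia_nab B) (hR (Set.mem_image_of_mem dia h)))

/-- (Kripke completeness): every Kripke valid formula is provable in IntGC. -/
theorem completeness (A : Formula) (h : ∀ M : KModel, ∀ x : M.X, M.sat x A) :
    Prov A := by
  by_contra hA
  obtain ⟨Δ, -, hΔ, hAΔ⟩ := exists_isPrimeTheory_notMem (Γ := ∅) fun d => hA d.prov_of_empty
  have : Nonempty PrimeTheory := ⟨⟨Δ, hΔ⟩⟩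
  exact hAΔ ((canonicalModel_sat_iff ⟨Δ, hΔ⟩ A).1 (h canonicalModel _))
end

section
/- (Lemma 4) For any IntGC-model M = (X,≤,R,v) and any formula A, the quotient set X/∼ of X by the equivalence ∼ determined by the set Σ of A is finite. -/
open Formula

section Aux

variable {X : Type} (le R : X → X → Prop) (v : ℕ → X → Prop)

lemma sat_nab_dia (F B : Formula)
    (h : ∀ z, Sat le R v z F ↔ Sat le R v z (nab B)) (x : X) :
    Sat le R v x (nab (dia F)) ↔ Sat le R v x (nab B) := by
  constructor
  · intro hx y hyx
    obtain ⟨z, hyz, hz⟩ := hx y hyx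
    exact ((h z).1 hz) y hyz
  · intro hx y hyx
    exact ⟨x, hyx, (h x).2 hx⟩

lemma sat_dia_nab (F B : Formula)
    (h : ∀ z, Sat le R v z F ↔ Sat le R v z (dia B)) (x : X) :
    Sat le R v x (dia (nab F)) ↔ Sat le R v x (dia B) := by
  constructor
  · intro ⟨y, hxy, hy⟩
    exact (h x).1 (hy x hxy)
  · intro ⟨y, hxy, hy⟩
    exact ⟨y, hxy, fun w hwy => (h w).2 ⟨y, hwy, hy⟩⟩

lemma sat_ndIter (B : Formula) : ∀ n x,
    Sat le R v x (ndIter n (nab B)) ↔ Sat le R v x (nab B) := by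
  intro n
  induction n with
  | zero => intro x; rfl
  | succ n ih =>
      intro x
      exact sat_nab_dia le R v _ B ih x

lemma sat_dnIter (B : Formula) : ∀ n x,
    Sat le R v x (dnIter n (dia B)) ↔ Sat le R v x (dia B) := by
  intro n
  induction n with
  | zero => intro x; rfl
  | succ n ih =>
      intro x
      exact sat_dia_nab le R v _ B ih x

lemma sat_dia_congr (F G : Formula)
    (h : ∀ z, Sat le R v z F ↔ Sat le R v z G) (x : X) :
    Sat le R v x (dia F) ↔ Sat le R v x (dia G) := by
  constructor
  · intro ⟨y, hxy, hy⟩; exact ⟨y, hxy, (h y).1 hy⟩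
  · intro ⟨y, hxy, hy⟩; exact ⟨y, hxy, (h y).2 hy⟩

lemma sat_nab_congr (F G : Formula)
    (h : ∀ z, Sat le R v z F ↔ Sat le R v z G) (x : X) :
    Sat le R v x (nab F) ↔ Sat le R v x (nab G) := by
  constructor
  · intro hx y hyx; exact (h y).1 (hx y hyx)
  · intro hx y hyx; exact (h y).2 (hx y hyx)

end Aux

lemma dia_injective : Function.Injective Formula.dia := by
  intro a b h; injection h

lemma nab_injective : Function.Injective Formula.nab := by
  intro a b h; injection h

lemma subf_finite (A : Formula) : (Subf A).Finite := by
  induction A with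
  | var p => exact Set.finite_singleton _
  | and A B ihA ihB => exact ((ihA.union ihB).insert _)
  | or A B ihA ihB => exact ((ihA.union ihB).insert _)
  | imp A B ihA ihB => exact ((ihA.union ihB).insert _)
  | neg A ih => exact ih.insert _
  | dia A ih => exact ih.insert _
  | nab A ih => exact ih.insert _

lemma gam_finite (A : Formula) : (Gam A).Finite := by
  have h1 : {F | ∃ B, dia B ∈ Subf A ∧ F = nab (dia B)}
      ⊆ (fun B => nab (dia B)) '' (Formula.dia ⁻¹' Subf A) := by
    rintro F ⟨B, hB, rfl⟩; exact ⟨B, hB, rfl⟩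
  have h2 : {F | ∃ B, nab B ∈ Subf A ∧ F = dia (nab B)}
      ⊆ (fun B => dia (nab B)) '' (Formula.nab ⁻¹' Subf A) := by
    rintro F ⟨B, hB, rfl⟩; exact ⟨B, hB, rfl⟩
  have hp1 : (Formula.dia ⁻¹' Subf A).Finite :=
    (subf_finite A).preimage (Set.injOn_of_injective dia_injective)
  have hp2 : (Formula.nab ⁻¹' Subf A).Finite :=
    (subf_finite A).preimage (Set.injOn_of_injective nab_injective)
  exact (((subf_finite A).union ((hp1.image _).subset h1)).union ((hp2.image _).subset h2))

/-- A finite core of Σ. -/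
def Sig0 (A : Formula) : Set Formula :=
  Subf A
  ∪ {F | ∃ B, nab B ∈ Gam A ∧ (F = nab B ∨ F = dia (nab B))}
  ∪ {F | ∃ B, dia B ∈ Gam A ∧ (F = dia B ∨ F = nab (dia B))}

lemma sig0_finite (A : Formula) : (Sig0 A).Finite := by
  have hp1 : (Formula.nab ⁻¹' Gam A).Finite :=
    (gam_finite A).preimage (Set.injOn_of_injective nab_injective)
  have hp2 : (Formula.dia ⁻¹' Gam A).Finite :=
    (gam_finite A).preimage (Set.injOn_of_injective dia_injective)
  have h1 : {F | ∃ B, nab B ∈ Gam A ∧ (F = nab B ∨ F = dia (nab B))}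
      ⊆ ((fun B => nab B) '' (Formula.nab ⁻¹' Gam A))
        ∪ ((fun B => dia (nab B)) '' (Formula.nab ⁻¹' Gam A)) := by
    rintro F ⟨B, hB, rfl | rfl⟩
    · exact Or.inl ⟨B, hB, rfl⟩
    · exact Or.inr ⟨B, hB, rfl⟩
  have h2 : {F | ∃ B, dia B ∈ Gam A ∧ (F = dia B ∨ F = nab (dia B))}
      ⊆ ((fun B => dia B) '' (Formula.dia ⁻¹' Gam A))
        ∪ ((fun B => nab (dia B)) '' (Formula.dia ⁻¹' Gam A)) := by
    rintro F ⟨B, hB, rfl | rfl⟩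
    · exact Or.inl ⟨B, hB, rfl⟩
    · exact Or.inr ⟨B, hB, rfl⟩
  exact (((subf_finite A).union
      (((hp1.image _).union (hp1.image _)).subset h1)).union
      (((hp2.image _).union (hp2.image _)).subset h2))

lemma sig0_subset_sig (A : Formula) : Sig0 A ⊆ Sig A := by
  rintro F ((hF | ⟨B, hB, rfl | rfl⟩) | ⟨B, hB, rfl | rfl⟩)
  · exact Or.inl (Or.inl (Or.inl (Or.inl hF)))
  · exact Or.inl (Or.inl (Or.inl (Or.inr ⟨0, B, hB, rfl⟩)))
  · exact Or.inl (Or.inl (Or.inr ⟨0, B, hB, rfl⟩))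
  · exact Or.inl (Or.inr ⟨0, B, hB, rfl⟩)
  · exact Or.inr ⟨0, B, hB, rfl⟩

/-- Every formula of Σ is pointwise equivalent to a formula of the finite core. -/
lemma sig_collapse (M : KModel) (A : Formula) :
    ∀ F ∈ Sig A, ∃ G ∈ Sig0 A, ∀ x : M.X, M.sat x F ↔ M.sat x G := by
  rintro F ((((hF | ⟨n, B, hB, rfl⟩) | ⟨n, B, hB, rfl⟩) | ⟨n, B, hB, rfl⟩) | ⟨n, B, hB, rfl⟩)
  · exact ⟨F, Or.inl (Or.inl hF), fun x => Iff.rfl⟩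
  · exact ⟨nab B, Or.inl (Or.inr ⟨B, hB, Or.inl rfl⟩),
      fun x => sat_ndIter M.le M.R M.v B n x⟩
  · exact ⟨dia (nab B), Or.inl (Or.inr ⟨B, hB, Or.inr rfl⟩),
      fun x => sat_dia_congr M.le M.R M.v _ _ (sat_ndIter M.le M.R M.v B n) x⟩
  · exact ⟨dia B, Or.inr ⟨B, hB, Or.inl rfl⟩,
      fun x => sat_dnIter M.le M.R M.v B n x⟩
  · exact ⟨nab (dia B), Or.inr ⟨B, hB, Or.inr rfl⟩,
      fun x => sat_nab_congr M.le M.R M.v _ _ (sat_dnIter M.le M.R M.v B n) x⟩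


/-- (Lemma 4): the quotient X/∼ through Σ is finite. -/

theorem quotient_finite (M : KModel) (A : Formula) :
    Finite (Quotient (simSetoid M A)) := by
  have hfin : Finite (Sig0 A) := (sig0_finite A).to_subtype
  have : Finite ((Sig0 A) → Prop) := inferInstance
  refine Finite.of_injective
    (Quotient.lift (fun x (F : Sig0 A) => M.sat x F.1)
      (fun x y hxy => funext fun F =>
        propext (hxy F.1 (sig0_subset_sig A F.2)))) ?_
  intro a b hab
  induction a using Quotient.inductionOn with | h x =>
  induction b using Quotient.inductionOn with | h y =>
  apply Quotient.sound
  intro F hF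
  obtain ⟨G, hG, hequiv⟩ := sig_collapse M A F hF
  have := congrFun hab ⟨G, hG⟩
  simp only [Quotient.lift_mk] at this
  rw [hequiv x, hequiv y]
  exact iff_of_eq this
end

section
/- (Lemma 6) For any IntGC-model M = (X,≤,R,v) and any formula A, the structure (X/∼, ≤^f, R^f) is a Kripke frame for IntGC; in particular, ≤^f is a preorder and [x] ≥^f [y], [y] R^f [z], [z] ≥^f [w] together imply [x] R^f [w]. -/
open Formula

lemma subf_self (F : Formula) : F ∈ Subf F := by
  cases F <;> simp [Subf]

lemma subf_trans : ∀ (A F G : Formula), F ∈ Subf A → G ∈ Subf F → G ∈ Subf A := by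
  intro A
  induction A with
  | var p => intro F G hF hG; simp [Subf] at hF; subst hF; exact hG
  | and A B ihA ihB =>
    intro F G hF hG
    rcases hF with hF | hF | hF
    · subst hF; exact hG
    · exact Or.inr (Or.inl (ihA F G hF hG))
    · exact Or.inr (Or.inr (ihB F G hF hG))
  | or A B ihA ihB =>
    intro F G hF hG
    rcases hF with hF | hF | hF
    · subst hF; exact hG
    · exact Or.inr (Or.inl (ihA F G hF hG))
    · exact Or.inr (Or.inr (ihB F G hF hG))
  | imp A B ihA ihB =>
    intro F G hF hG
    rcases hF with hF | hF | hF
    · subst hF; exact hG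
    · exact Or.inr (Or.inl (ihA F G hF hG))
    · exact Or.inr (Or.inr (ihB F G hF hG))
  | neg A ihA =>
    intro F G hF hG
    rcases hF with hF | hF
    · subst hF; exact hG
    · exact Or.inr (ihA F G hF hG)
  | dia A ihA =>
    intro F G hF hG
    rcases hF with hF | hF
    · subst hF; exact hG
    · exact Or.inr (ihA F G hF hG)
  | nab A ihA =>
    intro F G hF hG
    rcases hF with hF | hF
    · subst hF; exact hG
    · exact Or.inr (ihA F G hF hG)

lemma nab_subf {A B : Formula} (h : nab B ∈ Subf A) : B ∈ Subf A :=
  subf_trans A (nab B) B h (Or.inr (subf_self B))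

lemma nab_sig {A B : Formula} (h : nab B ∈ Sig A) : B ∈ Sig A := by
  rcases h with (((h | h) | h) | h) | h
  · exact Or.inl (Or.inl (Or.inl (Or.inl (nab_subf h))))
  · rcases h with ⟨n, B', hB', heq⟩
    cases n with
    | zero =>
      simp [ndIter] at heq
      subst heq
      rcases hB' with (h | h) | h
      · exact Or.inl (Or.inl (Or.inl (Or.inl (nab_subf h))))
      · rcases h with ⟨C, hC, hCe⟩
        injection hCe with hCe
        subst hCe
        exact Or.inl (Or.inl (Or.inl (Or.inl hC)))
      · rcases h with ⟨C, hC, hCe⟩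
        exact absurd hCe (by simp)
    | succ n =>
      simp only [ndIter] at heq
      injection heq with heq
      exact Or.inl (Or.inl (Or.inr ⟨n, B', hB', heq⟩))
  · rcases h with ⟨n, B', hB', heq⟩
    exact absurd heq (by simp)
  · rcases h with ⟨n, B', hB', heq⟩
    cases n with
    | zero => exact absurd heq (by simp [dnIter])
    | succ n => exact absurd heq (by simp [dnIter])
  · rcases h with ⟨n, B', hB', heq⟩
    injection heq with heq
    exact Or.inl (Or.inr ⟨n, B', hB', heq⟩)

/-- (Lemma 6): (X/∼, ≤^f, R^f) is a Kripke frame for IntGC: the carrier is nonempty,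
≤^f is a preorder, and a ≥^f b, b R^f c, c ≥^f d imply a R^f d. -/
theorem filtration_frame (M : KModel) (A : Formula) :
    Nonempty (Quotient (simSetoid M A)) ∧
    (∀ a, leF M A a a) ∧
    (∀ a b c, leF M A a b → leF M A b c → leF M A a c) ∧
    (∀ a b c d, leF M A b a → RF M A b c → leF M A d c → RF M A a d) := by
  refine ⟨⟨Quotient.mk _ M.ne.some⟩, ?_, ?_, ?_⟩
  · intro a x y hx hy B hB hxB
    have h : (simSetoid M A).r x y := Quotient.exact (hx.trans hy.symm)
    exact (h B hB).mp hxB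
  · intro a b c hab hbc x z hx hz B hB hxB
    obtain ⟨y, hy⟩ := Quotient.exists_rep b
    exact hbc y z hy hz B hB (hab x y hx hy B hB hxB)
  · intro a b c d hba hbc hdc x w hx hw B hB hwB
    obtain ⟨x', hx'⟩ := Quotient.exists_rep b
    obtain ⟨z, hz⟩ := Quotient.exists_rep c
    have hznab : M.sat z (nab B) := hdc w z hw hz (nab B) hB hwB
    have hx'B : M.sat x' B := hbc x' z hx' hz B hB hznab
    exact hba x' x hx' hx B (nab_sig hB) hx'B
end

section
/- (Lemma 7) For any IntGC-model M = (X,≤,R,v), any formula A, and all points x, y: [x] R^f [y] if and only if for all formulas B with ◆B ∈ Σ, y ⊨ B implies x ⊨ ◆B. -/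
open Formula

/-- Closure: if ∇C ∈ Σ then ◆∇C ∈ Σ. -/
lemma dia_nab_mem_Sig (A C : Formula) (h : nab C ∈ Sig A) : dia (nab C) ∈ Sig A := by
  rcases h with ((((h | h) | h) | h) | h)
  · -- nab C ∈ Subf A ⊆ Γ, take ◆(∇◆)⁰∇C
    exact Or.inl (Or.inl (Or.inr ⟨0, C, Or.inl (Or.inl h), rfl⟩))
  · rcases h with ⟨n, B, hB, hEq⟩
    cases n with
    | zero =>
      simp only [ndIter] at hEq
      injection hEq with h'
      subst h'
      exact Or.inl (Or.inl (Or.inr ⟨0, C, hB, rfl⟩))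
    | succ m =>
      exact Or.inl (Or.inl (Or.inr ⟨m + 1, B, hB, by rw [hEq]⟩))
  · rcases h with ⟨n, B, hB, hEq⟩
    exact Formula.noConfusion hEq
  · rcases h with ⟨n, B, hB, hEq⟩
    cases n with
    | zero => simp only [dnIter] at hEq; exact Formula.noConfusion hEq
    | succ m => simp only [dnIter] at hEq; exact Formula.noConfusion hEq
  · rcases h with ⟨n, B, hB, hEq⟩
    injection hEq with h'
    subst h'
    exact Or.inl (Or.inr ⟨n + 1, B, hB, rfl⟩)

/-- Closure: if ◆C ∈ Σ then ∇◆C ∈ Σ. -/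
lemma nab_dia_mem_Sig (A C : Formula) (h : dia C ∈ Sig A) : nab (dia C) ∈ Sig A := by
  rcases h with ((((h | h) | h) | h) | h)
  · -- dia C ∈ Subf A ⊆ Γ, take ∇(◆∇)⁰◆C
    exact Or.inr ⟨0, C, Or.inl (Or.inl h), rfl⟩
  · rcases h with ⟨n, B, hB, hEq⟩
    cases n with
    | zero => simp only [ndIter] at hEq; exact Formula.noConfusion hEq
    | succ m => simp only [ndIter] at hEq; exact Formula.noConfusion hEq
  · rcases h with ⟨n, B, hB, hEq⟩
    injection hEq with h'
    subst h'
    exact Or.inl (Or.inl (Or.inl (Or.inr ⟨n + 1, B, hB, rfl⟩)))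
  · rcases h with ⟨n, B, hB, hEq⟩
    cases n with
    | zero =>
      simp only [dnIter] at hEq
      injection hEq with h'
      subst h'
      exact Or.inr ⟨0, C, hB, rfl⟩
    | succ m =>
      exact Or.inr ⟨m + 1, B, hB, by rw [hEq]⟩
  · rcases h with ⟨n, B, hB, hEq⟩
    exact Formula.noConfusion hEq

/-- (Lemma 7): [x] R^f [y] iff for all B with ◆B ∈ Σ, y ⊨ B implies x ⊨ ◆B. -/
theorem RF_characterization (M : KModel) (A : Formula) (x y : M.X) :
    RF M A (Quotient.mk (simSetoid M A) x) (Quotient.mk (simSetoid M A) y) ↔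
      ∀ B : Formula, Formula.dia B ∈ Sig A → M.sat y B → M.sat x (Formula.dia B) := by
  constructor
  · intro h B hB hyB
    -- y ⊨ ∇◆B, and ∇◆B ∈ Σ, so RF yields x ⊨ ◆B
    exact h x y rfl rfl (dia B) (nab_dia_mem_Sig A B hB)
      (fun z hz => ⟨y, hz, hyB⟩)
  · intro h x' y' hx' hy' B hB hy'B
    have hxx' := Quotient.exact hx'
    have hyy' := Quotient.exact hy'
    -- y ⊨ ∇B
    have hyB : M.sat y (nab B) := (hyy' (nab B) hB).mp hy'B
    -- x ⊨ ◆∇B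
    have hxd : M.sat x (dia (nab B)) := h (nab B) (dia_nab_mem_Sig A B hB) hyB
    -- x' ⊨ ◆∇B
    have hx'd : M.sat x' (dia (nab B)) :=
      (hxx' (dia (nab B)) (dia_nab_mem_Sig A B hB)).mpr hxd
    obtain ⟨z, hRz, hznab⟩ := hx'd
    exact hznab x' hRz
end

section
/- (Finite model property) IntGC has the finite model property: if a formula A is not provable in IntGC, then there exists an IntGC-model on a Kripke frame for IntGC with a finite set of worlds in which A is not valid, i.e. some point of this finite model does not satisfy A. -/
open Formula

namespace IGC
open Formula

/-! ### Hilbert-style derivation toolkit -/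

theorem provI (A : Formula) : Prov (imp A A) :=
  Prov.mp (Prov.mp (Prov.ax2 A (imp A A) A) (Prov.ax1 A (imp A A))) (Prov.ax1 A A)

theorem provTop : Prov top := provI (var 0)

theorem provK {X B : Formula} (h : Prov B) : Prov (imp X B) := Prov.mp (Prov.ax1 B X) h

theorem provComp {A B C : Formula} (h1 : Prov (imp A B)) (h2 : Prov (imp B C)) :
    Prov (imp A C) :=
  Prov.mp (Prov.mp (Prov.ax2 A B C) (provK h2)) h1

theorem provS {X B C : Formula} (h1 : Prov (imp X (imp B C))) (h2 : Prov (imp X B)) :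
    Prov (imp X C) :=
  Prov.mp (Prov.mp (Prov.ax2 X B C) h1) h2

theorem provFlip {A B C : Formula} (h : Prov (imp A (imp B C))) : Prov (imp B (imp A C)) :=
  provComp (Prov.ax1 B A) (Prov.mp (Prov.ax2 A B C) h)

theorem provImpTop (A : Formula) : Prov (imp A top) := provK provTop

theorem provBotElim (B : Formula) : Prov (imp bot B) :=
  Prov.mp (provFlip (Prov.ax10 top B)) provTop

theorem provAndIntro {X A B : Formula} (h1 : Prov (imp X A)) (h2 : Prov (imp X B)) :
    Prov (imp X (Formula.and A B)) :=
  provS (provComp h1 (Prov.ax5 A B)) h2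

theorem provOrElim {A B C : Formula} (h1 : Prov (imp A C)) (h2 : Prov (imp B C)) :
    Prov (imp (Formula.or A B) C) :=
  Prov.mp (Prov.mp (Prov.ax8 A B C) h1) h2

theorem provImpMonoR {B D C : Formula} (h : Prov (imp D C)) :
    Prov (imp (imp B D) (imp B C)) :=
  Prov.mp (Prov.ax2 B D C) (provK h)

theorem provCurry {B X C : Formula} (h : Prov (imp (Formula.and B X) C)) :
    Prov (imp X (imp B C)) :=
  provComp (provFlip (Prov.ax5 B X)) (provImpMonoR h)

theorem provImpNeg (B : Formula) : Prov (imp (imp B bot) (neg B)) :=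
  Prov.mp (Prov.ax9 B top) (provImpTop B)

/-! ### Finite conjunctions and disjunctions -/

def conj : List Formula → Formula
  | [] => top
  | C :: L => Formula.and C (conj L)

def disj : List Formula → Formula
  | [] => bot
  | C :: L => Formula.or C (disj L)

theorem conj_imp_mem {L : List Formula} {C : Formula} (h : C ∈ L) :
    Prov (imp (conj L) C) := by
  induction L with
  | nil => simp at h
  | cons D L ih =>
    rcases List.mem_cons.1 h with rfl | h
    · exact Prov.ax3 C (conj L)
    · exact provComp (Prov.ax4 D (conj L)) (ih h)

theorem imp_conj_all {D : Formula} {L : List Formula} (h : ∀ C ∈ L, Prov (imp D C)) :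
    Prov (imp D (conj L)) := by
  induction L with
  | nil => exact provImpTop D
  | cons C L ih =>
    exact provAndIntro (h C (by simp)) (ih fun C hC => h C (List.mem_cons.2 (Or.inr hC)))

theorem conj_mono {L M : List Formula} (h : ∀ C ∈ L, C ∈ M) :
    Prov (imp (conj M) (conj L)) :=
  imp_conj_all fun C hC => conj_imp_mem (h C hC)

theorem disj_mem {K : List Formula} {C : Formula} (h : C ∈ K) :
    Prov (imp C (disj K)) := by
  induction K with
  | nil => simp at h
  | cons D K ih =>
    rcases List.mem_cons.1 h with rfl | h
    · exact Prov.ax6 C (disj K)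
    · exact provComp (ih h) (Prov.ax7 D (disj K))

theorem disj_elim_all {K : List Formula} {E : Formula} (h : ∀ C ∈ K, Prov (imp C E)) :
    Prov (imp (disj K) E) := by
  induction K with
  | nil => exact provBotElim E
  | cons C K ih =>
    exact provOrElim (h C (by simp)) (ih fun C hC => h C (List.mem_cons.2 (Or.inr hC)))

theorem disj_mono {K M : List Formula} (h : ∀ C ∈ K, C ∈ M) :
    Prov (imp (disj K) (disj M)) :=
  disj_elim_all fun C hC => disj_mem (h C hC)

/-! ### Modal derivations from the Galois connection -/

theorem provUnit (A : Formula) : Prov (imp A (nab (dia A))) := Prov.gc2 (provI (dia A))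

theorem provCounit (A : Formula) : Prov (imp (dia (nab A)) A) := Prov.gc1 (provI (nab A))

theorem diaMono {X Y : Formula} (h : Prov (imp X Y)) : Prov (imp (dia X) (dia Y)) :=
  Prov.gc1 (provComp h (provUnit Y))

theorem nabMono {X Y : Formula} (h : Prov (imp X Y)) : Prov (imp (nab X) (nab Y)) :=
  Prov.gc2 (provComp (provCounit X) h)

theorem nabConj (X Y : Formula) :
    Prov (imp (Formula.and (nab X) (nab Y)) (nab (Formula.and X Y))) :=
  Prov.gc2 (provAndIntro (provComp (diaMono (Prov.ax3 _ _)) (provCounit X))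
                         (provComp (diaMono (Prov.ax4 _ _)) (provCounit Y)))

theorem conj_nab (L : List Formula) : Prov (imp (conj (L.map nab)) (nab (conj L))) := by
  induction L with
  | nil => simpa [conj] using Prov.gc2 (provImpTop (dia top))
  | cons C L ih =>
    exact provComp
      (provAndIntro (Prov.ax3 (nab C) (conj (L.map nab)))
        (provComp (Prov.ax4 (nab C) (conj (L.map nab))) ih))
      (nabConj C (conj L))

theorem diaOr (X Y : Formula) :
    Prov (imp (dia (Formula.or X Y)) (Formula.or (dia X) (dia Y))) :=
  Prov.gc1 (provOrElim (Prov.gc2 (Prov.ax6 (dia X) (dia Y)))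
                       (Prov.gc2 (Prov.ax7 (dia X) (dia Y))))

theorem provDiaBot : Prov (imp (dia bot) bot) := Prov.gc1 (provBotElim (nab bot))

/-! ### Derivability from a set of hypotheses -/

def Der (G : Set Formula) (B : Formula) : Prop :=
  ∃ L : List Formula, (∀ C ∈ L, C ∈ G) ∧ Prov (imp (conj L) B)

theorem Der.ofMem {G : Set Formula} {B : Formula} (h : B ∈ G) : Der G B :=
  ⟨[B], by simpa using h, conj_imp_mem (by simp)⟩

theorem Der.ofProv {G : Set Formula} {B : Formula} (h : Prov B) : Der G B :=
  ⟨[], by simp, provK h⟩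

theorem Der.mono {G D : Set Formula} {B : Formula} (h : Der G B) (hs : G ⊆ D) : Der D B := by
  obtain ⟨L, e, p⟩ := h; exact ⟨L, fun C hC => hs (e C hC), p⟩

theorem Der.mp {G : Set Formula} {B C : Formula} (h1 : Der G (imp B C)) (h2 : Der G B) :
    Der G C := by
  obtain ⟨L1, e1, p1⟩ := h1; obtain ⟨L2, e2, p2⟩ := h2
  refine ⟨L1 ++ L2, ?_, ?_⟩
  · intro C hC; rcases List.mem_append.1 hC with h | h
    exacts [e1 _ h, e2 _ h]
  · exact provS (provComp (conj_mono fun C hC => List.mem_append.2 (Or.inl hC)) p1)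
      (provComp (conj_mono fun C hC => List.mem_append.2 (Or.inr hC)) p2)

theorem Der.prov_imp {G : Set Formula} {B C : Formula} (h : Der G B)
    (p : Prov (imp B C)) : Der G C :=
  Der.mp (Der.ofProv p) h

theorem Der.deduct {G : Set Formula} {B C : Formula} (h : Der (insert B G) C) :
    Der G (imp B C) := by
  obtain ⟨L, e, p⟩ := h
  refine ⟨L.filter (· ≠ B), ?_, ?_⟩
  · intro C hC
    have h1 := List.mem_filter.1 hC
    have h2 : C ≠ B := by simpa using h1.2
    rcases e C h1.1 with h | h
    · exact absurd h h2
    · exact h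
  · have hsub : ∀ x ∈ L, x ∈ B :: L.filter (· ≠ B) := by
      intro x hx
      by_cases hb : x = B
      · exact List.mem_cons.2 (Or.inl hb)
      · exact List.mem_cons.2 (Or.inr (List.mem_filter.2 ⟨hx, by simpa using hb⟩))
    have q : Prov (imp (conj (B :: L.filter (· ≠ B))) C) := provComp (conj_mono hsub) p
    exact provCurry (by simpa [conj] using q)

/-! ### Prime theories -/

structure GoodT (T : Set Formula) : Prop where
  closed : ∀ B, Der T B → B ∈ T
  nobot : bot ∉ T
  prime : ∀ B C, Formula.or B C ∈ T → B ∈ T ∨ C ∈ T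

theorem GoodT.mp_mem {T : Set Formula} (h : GoodT T) {B C : Formula}
    (hB : B ∈ T) (p : Prov (imp B C)) : C ∈ T :=
  h.closed C ((Der.ofMem hB).prov_imp p)

/-! ### The pair extension (Lindenbaum) lemma -/

def Bad (D G : Set Formula) : Prop :=
  ∃ K : List Formula, (∀ d ∈ K, d ∈ D) ∧ Der G (disj K)

theorem chain_list {c : Set (Set Formula)} (hc : IsChain (· ⊆ ·) c) (hne : c.Nonempty)
    (L : List Formula) (hL : ∀ x ∈ L, x ∈ ⋃₀ c) : ∃ s ∈ c, ∀ x ∈ L, x ∈ s := by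
  induction L with
  | nil => exact ⟨hne.choose, hne.choose_spec, by simp⟩
  | cons a L ih =>
    obtain ⟨s, hs, hLs⟩ := ih fun x hx => hL x (List.mem_cons.2 (Or.inr hx))
    obtain ⟨t, ht, hat⟩ := hL a (by simp)
    rcases hc.total hs ht with h | h
    · exact ⟨t, ht, fun x hx => by
        rcases List.mem_cons.1 hx with rfl | hx
        exacts [hat, h (hLs x hx)]⟩
    · exact ⟨s, hs, fun x hx => by
        rcases List.mem_cons.1 hx with rfl | hx
        exacts [h hat, hLs x hx]⟩

theorem pairExt {G D : Set Formula} (h : ¬ Bad D G) :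
    ∃ T, G ⊆ T ∧ GoodT T ∧ ∀ d ∈ D, d ∉ T := by
  have hchainH : ∀ c ⊆ {G' | ¬ Bad D G'}, IsChain (· ⊆ ·) c → c.Nonempty →
      ∃ ub ∈ {G' | ¬ Bad D G'}, ∀ s ∈ c, s ⊆ ub := by
    intro c hcS hchain hcne
    refine ⟨⋃₀ c, ?_, fun s hs => Set.subset_sUnion_of_mem hs⟩
    intro hbad
    obtain ⟨K, hK, L, hL, p⟩ := hbad
    obtain ⟨s, hsc, hs⟩ := chain_list hchain hcne L hL
    exact hcS hsc ⟨K, hK, L, hs, p⟩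
  obtain ⟨M, hGM, hM⟩ := zorn_subset_nonempty {G' | ¬ Bad D G'} hchainH G h
  · have hMnb : ¬ Bad D M := hM.1
    -- auxiliary: anything not in M creates badness when added
    have key : ∀ B, B ∉ M → Bad D (insert B M) := by
      intro B hB
      by_contra hbad
      exact hB (hM.2 hbad (Set.subset_insert B M) (Set.mem_insert B M))
    have closed : ∀ B, Der M B → B ∈ M := by
      intro B hDer
      by_contra hB
      obtain ⟨K, hK, hd⟩ := key B hB
      exact hMnb ⟨K, hK, Der.mp hd.deduct hDer⟩
    refine ⟨M, hGM, ⟨closed, ?_, ?_⟩, ?_⟩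
    · intro hbot
      exact hMnb ⟨[], by simp, by simpa [disj] using Der.ofMem hbot⟩
    · intro B C hor
      by_contra hbc
      push_neg at hbc
      obtain ⟨K1, hK1, d1⟩ := key B hbc.1
      obtain ⟨K2, hK2, d2⟩ := key C hbc.2
      have e1 : Der M (imp B (disj (K1 ++ K2))) :=
        d1.deduct.prov_imp (provImpMonoR (disj_mono fun x hx => List.mem_append.2 (Or.inl hx)))
      have e2 : Der M (imp C (disj (K1 ++ K2))) :=
        d2.deduct.prov_imp (provImpMonoR (disj_mono fun x hx => List.mem_append.2 (Or.inr hx)))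
      have : Der M (disj (K1 ++ K2)) :=
        (((Der.ofProv (Prov.ax8 B C (disj (K1 ++ K2)))).mp e1).mp e2).mp (Der.ofMem hor)
      refine hMnb ⟨K1 ++ K2, ?_, this⟩
      intro d hd; rcases List.mem_append.1 hd with h | h
      exacts [hK1 d h, hK2 d h]
    · intro d hd hdM
      exact hMnb ⟨[d], by simpa using hd, (Der.ofMem hdM).prov_imp (disj_mem (by simp))⟩

/-! ### Subformulas -/

theorem subf_self (A : Formula) : A ∈ Subf A := by
  cases A <;> simp [Subf]

theorem subf_trans {A B : Formula} (h : B ∈ Subf A) : Subf B ⊆ Subf A := by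
  induction A with
  | var p =>
    simp only [Subf, Set.mem_singleton_iff] at h
    subst h; exact subset_refl _
  | and A1 A2 ih1 ih2 =>
    rcases Set.mem_insert_iff.1 h with rfl | h
    · exact subset_refl _
    · rcases h with h | h
      · exact (ih1 h).trans fun x hx => Set.mem_insert_iff.2 (Or.inr (Or.inl hx))
      · exact (ih2 h).trans fun x hx => Set.mem_insert_iff.2 (Or.inr (Or.inr hx))
  | or A1 A2 ih1 ih2 =>
    rcases Set.mem_insert_iff.1 h with rfl | h
    · exact subset_refl _
    · rcases h with h | h
      · exact (ih1 h).trans fun x hx => Set.mem_insert_iff.2 (Or.inr (Or.inl hx))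
      · exact (ih2 h).trans fun x hx => Set.mem_insert_iff.2 (Or.inr (Or.inr hx))
  | imp A1 A2 ih1 ih2 =>
    rcases Set.mem_insert_iff.1 h with rfl | h
    · exact subset_refl _
    · rcases h with h | h
      · exact (ih1 h).trans fun x hx => Set.mem_insert_iff.2 (Or.inr (Or.inl hx))
      · exact (ih2 h).trans fun x hx => Set.mem_insert_iff.2 (Or.inr (Or.inr hx))
  | neg A1 ih1 =>
    rcases Set.mem_insert_iff.1 h with rfl | h
    · exact subset_refl _
    · exact (ih1 h).trans fun x hx => Set.mem_insert_iff.2 (Or.inr hx)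
  | dia A1 ih1 =>
    rcases Set.mem_insert_iff.1 h with rfl | h
    · exact subset_refl _
    · exact (ih1 h).trans fun x hx => Set.mem_insert_iff.2 (Or.inr hx)
  | nab A1 ih1 =>
    rcases Set.mem_insert_iff.1 h with rfl | h
    · exact subset_refl _
    · exact (ih1 h).trans fun x hx => Set.mem_insert_iff.2 (Or.inr hx)

theorem subf_and_left {A B C : Formula} (h : Formula.and B C ∈ Subf A) : B ∈ Subf A :=
  subf_trans h (Set.mem_insert_iff.2 (Or.inr (Set.mem_union_left _ (subf_self B))))

theorem subf_and_right {A B C : Formula} (h : Formula.and B C ∈ Subf A) : C ∈ Subf A :=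
  subf_trans h (Set.mem_insert_iff.2 (Or.inr (Set.mem_union_right _ (subf_self C))))

theorem subf_or_left {A B C : Formula} (h : Formula.or B C ∈ Subf A) : B ∈ Subf A :=
  subf_trans h (Set.mem_insert_iff.2 (Or.inr (Set.mem_union_left _ (subf_self B))))

theorem subf_or_right {A B C : Formula} (h : Formula.or B C ∈ Subf A) : C ∈ Subf A :=
  subf_trans h (Set.mem_insert_iff.2 (Or.inr (Set.mem_union_right _ (subf_self C))))

theorem subf_imp_left {A B C : Formula} (h : imp B C ∈ Subf A) : B ∈ Subf A :=
  subf_trans h (Set.mem_insert_iff.2 (Or.inr (Set.mem_union_left _ (subf_self B))))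

theorem subf_imp_right {A B C : Formula} (h : imp B C ∈ Subf A) : C ∈ Subf A :=
  subf_trans h (Set.mem_insert_iff.2 (Or.inr (Set.mem_union_right _ (subf_self C))))

theorem subf_neg {A B : Formula} (h : neg B ∈ Subf A) : B ∈ Subf A :=
  subf_trans h (Set.mem_insert_iff.2 (Or.inr (subf_self B)))

theorem subf_dia {A B : Formula} (h : dia B ∈ Subf A) : B ∈ Subf A :=
  subf_trans h (Set.mem_insert_iff.2 (Or.inr (subf_self B)))

theorem subf_nab {A B : Formula} (h : nab B ∈ Subf A) : B ∈ Subf A :=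
  subf_trans h (Set.mem_insert_iff.2 (Or.inr (subf_self B)))

theorem subf_finite (A : Formula) : (Subf A).Finite := by
  induction A with
  | var p => simpa [Subf] using Set.finite_singleton _
  | and A1 A2 ih1 ih2 => exact (ih1.union ih2).insert _
  | or A1 A2 ih1 ih2 => exact (ih1.union ih2).insert _
  | imp A1 A2 ih1 ih2 => exact (ih1.union ih2).insert _
  | neg A1 ih1 => exact ih1.insert _
  | dia A1 ih1 => exact ih1.insert _
  | nab A1 ih1 => exact ih1.insert _

/-! ### World-extension lemmas -/

theorem root_lemma {A : Formula} (h : ¬ Prov A) : ∃ T, GoodT T ∧ A ∉ T := by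
  have hnb : ¬ Bad {A} (∅ : Set Formula) := by
    rintro ⟨K, hK, L, hL, p⟩
    have hL0 : Prov (imp top (conj L)) :=
      imp_conj_all fun C hC => absurd (hL C hC) (Set.notMem_empty C)
    have hKA : Prov (imp (disj K) A) :=
      disj_elim_all fun C hC => by
        have : C = A := hK C hC
        subst this; exact provI C
    exact h (Prov.mp (provComp (provComp hL0 p) hKA) provTop)
  obtain ⟨T, _, hT, hD⟩ := pairExt hnb
  exact ⟨T, hT, hD A rfl⟩

theorem imp_case {T : Set Formula} (hT : GoodT T) {B C : Formula} (h : imp B C ∉ T) :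
    ∃ U, GoodT U ∧ T ⊆ U ∧ B ∈ U ∧ C ∉ U := by
  have hnb : ¬ Bad {C} (insert B T) := by
    rintro ⟨K, hK, hd⟩
    have hKC : Prov (imp (disj K) C) :=
      disj_elim_all fun x hx => by
        have : x = C := hK x hx
        subst this; exact provI x
    have : Der T (imp B C) := hd.deduct.prov_imp (provImpMonoR hKC)
    exact h (hT.closed _ this)
  obtain ⟨U, hsub, hU, hD⟩ := pairExt hnb
  exact ⟨U, hU, fun x hx => hsub (Set.mem_insert_iff.2 (Or.inr hx)),
    hsub (Set.mem_insert B T), hD C rfl⟩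

theorem neg_case {T : Set Formula} (hT : GoodT T) {B : Formula} (h : neg B ∉ T) :
    ∃ U, GoodT U ∧ T ⊆ U ∧ B ∈ U := by
  have hnb : ¬ Bad (∅ : Set Formula) (insert B T) := by
    rintro ⟨K, hK, hd⟩
    have hKbot : Prov (imp (disj K) bot) :=
      disj_elim_all fun x hx => absurd (hK x hx) (Set.notMem_empty x)
    have : Der T (neg B) :=
      (hd.deduct.prov_imp (provImpMonoR hKbot)).prov_imp (provImpNeg B)
    exact h (hT.closed _ this)
  obtain ⟨U, hsub, hU, _⟩ := pairExt hnb
  exact ⟨U, hU, fun x hx => hsub (Set.mem_insert_iff.2 (Or.inr hx)),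
    hsub (Set.mem_insert B T)⟩

theorem nab_case {T : Set Formula} (hT : GoodT T) {B : Formula} (h : nab B ∉ T) :
    ∃ U, GoodT U ∧ (∀ C, nab C ∈ T → C ∈ U) ∧ B ∉ U := by
  have hnb : ¬ Bad {B} {C | nab C ∈ T} := by
    rintro ⟨K, hK, L, hL, p⟩
    have hKB : Prov (imp (disj K) B) :=
      disj_elim_all fun x hx => by
        have : x = B := hK x hx
        subst this; exact provI x
    have q : Prov (imp (conj (L.map nab)) (nab B)) :=
      provComp (conj_nab L) (nabMono (provComp p hKB))
    have : Der T (nab B) := by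
      refine ⟨L.map nab, ?_, q⟩
      intro x hx
      obtain ⟨C, hC, rfl⟩ := List.mem_map.1 hx
      exact hL C hC
    exact h (hT.closed _ this)
  obtain ⟨U, hsub, hU, hD⟩ := pairExt hnb
  exact ⟨U, hU, fun C hC => hsub hC, hD B rfl⟩

/-- The avoidance set used in the `dia` case, relative to a prime theory `T`
and the subformula bound `S`. -/
def DiaAvoid (S T : Set Formula) : Set Formula :=
  {F | ∃ C, F = nab C ∧ C ∉ T} ∪ {F | dia F ∈ S ∧ dia F ∉ T}

theorem dia_avoid_aux {S T : Set Formula} (hT : GoodT T) :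
    ∀ K : List Formula, dia (disj K) ∈ T → (∀ d ∈ K, d ∈ DiaAvoid S T) → False := by
  intro K
  induction K with
  | nil => exact fun hmem _ => hT.nobot (hT.mp_mem hmem provDiaBot)
  | cons d K ih =>
    intro hmem hK
    have hor : Formula.or (dia d) (dia (disj K)) ∈ T := hT.mp_mem hmem (diaOr d (disj K))
    rcases hT.prime _ _ hor with h1 | h1
    · rcases hK d (by simp) with ⟨C, rfl, hC⟩ | ⟨_, h2⟩
      · exact hC (hT.mp_mem h1 (provCounit C))
      · exact h2 h1
    · exact ih h1 fun x hx => hK x (List.mem_cons.2 (Or.inr hx))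

theorem dia_case {S T : Set Formula} (hT : GoodT T) {B : Formula} (h : dia B ∈ T) :
    ∃ U, GoodT U ∧ B ∈ U ∧ (∀ C, nab C ∈ U → C ∈ T) ∧
      (∀ C, dia C ∈ S → C ∈ U → dia C ∈ T) := by
  have hnb : ¬ Bad (DiaAvoid S T) {B} := by
    rintro ⟨K, hK, L, hL, p⟩
    have hBL : Prov (imp B (conj L)) :=
      imp_conj_all fun C hC => by
        have : C = B := hL C hC
        subst this; exact provI C
    have : dia (disj K) ∈ T := hT.mp_mem h (diaMono (provComp hBL p))
    exact dia_avoid_aux hT K this hK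
  obtain ⟨U, hsub, hU, hD⟩ := pairExt hnb
  refine ⟨U, hU, hsub rfl, ?_, ?_⟩
  · intro C hC
    by_contra hCT
    exact hD (nab C) (Or.inl ⟨C, rfl, hCT⟩) hC
  · intro C hCS hCU
    by_contra hCT
    exact hD C (Or.inr ⟨hCS, hCT⟩) hCU

/-! ### The finite canonical model -/

def Wld (A : Formula) : Set (Set Formula) := {u | ∃ T, GoodT T ∧ u = T ∩ Subf A}

abbrev Wrld (A : Formula) := {u : Set Formula // u ∈ Wld A}

def leA (A : Formula) (u w : Wrld A) : Prop := u.1 ⊆ w.1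

def RA (A : Formula) (u w : Wrld A) : Prop :=
  (∀ C, nab C ∈ Subf A → nab C ∈ w.1 → C ∈ u.1) ∧
  (∀ C, dia C ∈ Subf A → C ∈ w.1 → dia C ∈ u.1)

def vA (A : Formula) (p : ℕ) (u : Wrld A) : Prop := Formula.var p ∈ u.1

/-! ### The truth lemma -/

theorem truth (A : Formula) : ∀ B, B ∈ Subf A → ∀ u : Wrld A,
    Sat (leA A) (RA A) (vA A) u B ↔ B ∈ u.1 := by
  intro B
  induction B with
  | var p =>
    intro _ u
    simp [Sat, vA]
  | and B C ihB ihC =>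
    intro h u
    obtain ⟨T, hT, hu⟩ := u.2
    have hB := subf_and_left h
    have hC := subf_and_right h
    simp only [Sat]
    rw [ihB hB u, ihC hC u, hu]
    constructor
    · rintro ⟨h1, h2⟩
      exact ⟨hT.closed _ (((Der.ofProv (Prov.ax5 B C)).mp (Der.ofMem h1.1)).mp
        (Der.ofMem h2.1)), h⟩
    · intro hm
      exact ⟨⟨hT.mp_mem hm.1 (Prov.ax3 B C), hB⟩, ⟨hT.mp_mem hm.1 (Prov.ax4 B C), hC⟩⟩
  | or B C ihB ihC =>
    intro h u
    obtain ⟨T, hT, hu⟩ := u.2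
    have hB := subf_or_left h
    have hC := subf_or_right h
    simp only [Sat]
    rw [ihB hB u, ihC hC u, hu]
    constructor
    · rintro (h1 | h1)
      · exact ⟨hT.mp_mem h1.1 (Prov.ax6 B C), h⟩
      · exact ⟨hT.mp_mem h1.1 (Prov.ax7 B C), h⟩
    · intro hm
      rcases hT.prime _ _ hm.1 with h1 | h1
      · exact Or.inl ⟨h1, hB⟩
      · exact Or.inr ⟨h1, hC⟩
  | imp B C ihB ihC =>
    intro h u
    obtain ⟨T, hT, hu⟩ := u.2
    have hB := subf_imp_left h
    have hC := subf_imp_right h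
    simp only [Sat]
    constructor
    · intro hs
      by_contra hm
      have hmT : imp B C ∉ T := fun hx => hm (by rw [hu]; exact ⟨hx, h⟩)
      obtain ⟨U, hU, hTU, hBU, hCU⟩ := imp_case hT hmT
      let z : Wrld A := ⟨U ∩ Subf A, ⟨U, hU, rfl⟩⟩
      have hle : leA A u z := by
        intro x hx
        rw [hu] at hx
        exact ⟨hTU hx.1, hx.2⟩
      have hzB : Sat (leA A) (RA A) (vA A) z B := (ihB hB z).2 ⟨hBU, hB⟩
      exact hCU ((ihC hC z).1 (hs z hle hzB)).1
    · intro hm z hle hzB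
      obtain ⟨Uz, hUz, hz⟩ := z.2
      have hBz : B ∈ Uz := by
        have := (ihB hB z).1 hzB
        rw [hz] at this
        exact this.1
      have himpz : imp B C ∈ Uz := by
        have : imp B C ∈ z.1 := hle hm
        rw [hz] at this
        exact this.1
      have hCz : C ∈ Uz := hUz.closed _ ((Der.ofMem himpz).mp (Der.ofMem hBz))
      refine (ihC hC z).2 ?_
      rw [hz]
      exact ⟨hCz, hC⟩
  | neg B ihB =>
    intro h u
    obtain ⟨T, hT, hu⟩ := u.2
    have hB := subf_neg h
    simp only [Sat]
    constructor
    · intro hs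
      by_contra hm
      have hmT : neg B ∉ T := fun hx => hm (by rw [hu]; exact ⟨hx, h⟩)
      obtain ⟨U, hU, hTU, hBU⟩ := neg_case hT hmT
      let z : Wrld A := ⟨U ∩ Subf A, ⟨U, hU, rfl⟩⟩
      have hle : leA A u z := by
        intro x hx
        rw [hu] at hx
        exact ⟨hTU hx.1, hx.2⟩
      exact hs z hle ((ihB hB z).2 ⟨hBU, hB⟩)
    · intro hm z hle hzB
      obtain ⟨Uz, hUz, hz⟩ := z.2
      have hBz : B ∈ Uz := by
        have := (ihB hB z).1 hzB
        rw [hz] at this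
        exact this.1
      have hnz : neg B ∈ Uz := by
        have : neg B ∈ z.1 := hle hm
        rw [hz] at this
        exact this.1
      exact hUz.nobot (hUz.closed _ ((Der.ofMem hnz).prov_imp (Prov.ax10 B bot)
        |>.mp (Der.ofMem hBz)))
  | dia B ihB =>
    intro h u
    obtain ⟨T, hT, hu⟩ := u.2
    have hB := subf_dia h
    simp only [Sat]
    constructor
    · rintro ⟨w, hR, hw⟩
      have hBw : B ∈ w.1 := (ihB hB w).1 hw
      exact hR.2 B h hBw
    · intro hm
      have hmT : dia B ∈ T := by
        rw [hu] at hm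
        exact hm.1
      obtain ⟨U, hU, hBU, hcl1, hcl2⟩ := dia_case (S := Subf A) hT hmT
      let w : Wrld A := ⟨U ∩ Subf A, ⟨U, hU, rfl⟩⟩
      refine ⟨w, ⟨?_, ?_⟩, (ihB hB w).2 ⟨hBU, hB⟩⟩
      · intro C hCS hCw
        rw [hu]
        exact ⟨hcl1 C hCw.1, subf_nab hCS⟩
      · intro C hCS hCw
        rw [hu]
        exact ⟨hcl2 C hCS hCw.1, hCS⟩
  | nab B ihB =>
    intro h u
    obtain ⟨T, hT, hu⟩ := u.2
    have hB := subf_nab h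
    simp only [Sat]
    constructor
    · intro hs
      by_contra hm
      have hmT : nab B ∉ T := fun hx => hm (by rw [hu]; exact ⟨hx, h⟩)
      obtain ⟨U, hU, hcl, hBU⟩ := nab_case hT hmT
      let z : Wrld A := ⟨U ∩ Subf A, ⟨U, hU, rfl⟩⟩
      have hR : RA A z u := by
        constructor
        · intro C hCS hCu
          have : nab C ∈ T := by
            rw [hu] at hCu
            exact hCu.1
          exact ⟨hcl C this, subf_nab hCS⟩
        · intro C hCS hCu
          have hCT : C ∈ T := by
            rw [hu] at hCu
            exact hCu.1
          exact ⟨hcl (dia C) (hT.mp_mem hCT (provUnit C)), hCS⟩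
      have := (ihB hB z).1 (hs z hR)
      exact hBU this.1
    · intro hm z hR
      refine (ihB hB z).2 ?_
      have hnu : nab B ∈ u.1 := hm
      exact hR.1 B h hnu

end IGC


/-- (Finite model property): if A is not provable in IntGC, then there is an IntGC-model
with a finite set of worlds and a world at which A fails. -/
theorem finite_model_property (A : Formula) (h : ¬ Prov A) :
    ∃ M : KModel, Finite M.X ∧ ∃ x : M.X, ¬ M.sat x A := by
  obtain ⟨T, hT, hA⟩ := IGC.root_lemma h
  have huW : (T ∩ Subf A) ∈ IGC.Wld A := ⟨T, hT, rfl⟩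
  let u : IGC.Wrld A := ⟨_, huW⟩
  refine ⟨{ X := IGC.Wrld A, ne := ⟨u⟩, le := IGC.leA A,
            le_refl := fun x => subset_refl _,
            le_trans := fun x y z h1 h2 => h1.trans h2,
            R := IGC.RA A,
            frame := ?_, v := IGC.vA A,
            up := fun p x y hxy hx => hxy hx }, ?_, u, ?_⟩
  · rintro x y z w h1 ⟨c1, c2⟩ h3
    exact ⟨fun C hCS hCw => h1 (c1 C hCS (h3 hCw)),
           fun C hCS hCw => h1 (c2 C hCS (h3 hCw))⟩
  · have hfin : (IGC.Wld A).Finite := by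
      refine (IGC.subf_finite A).finite_subsets.subset ?_
      rintro v ⟨T', _, rfl⟩
      exact Set.inter_subset_right
    exact hfin.to_subtype
  · intro hs
    have hAu : A ∈ u.1 := (IGC.truth A A (IGC.subf_self A) u).1 hs
    exact hA hAu.1
end
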